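/- Let R be an n×n upper unitriangular real matrix and s uniform on [-1/2,1/2)ⁿ with independent coordinates. Let a ∈ ℤⁿ be the nearest-plane output: aᵢ = −round(sᵢ + ∑_{j>i} rᵢⱼ (sⱼ + aⱼ)) for i = n,…,1. Then each coordinate (R(s+a))ᵢ = Mod(wᵢ + sᵢ) with wᵢ = ∑_{j>i} rᵢⱼ(sⱼ + aⱼ) independent of sᵢ, hence (R(s+a))ᵢ is uniform on [-1/2,1/2) and E[‖R(s+a)‖²] = n/12. -/

import Mathlib

open MeasureTheory Matrix Finset

/-- `modHalf t` is the representative of `t` modulo `1` in `[-1/2, 1/2)`. -/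
noncomputable def modHalf (t : ℝ) : ℝ := t - round t

lemma modHalf_eq_fract (t : ℝ) : modHalf t = Int.fract (t + 1/2) - 1/2 := by
  simp only [modHalf, round_eq, Int.fract]; ring

lemma modHalf_mem (t : ℝ) : modHalf t ∈ Set.Ico (-(1/2):ℝ) (1/2) := by
  rw [modHalf_eq_fract]
  constructor
  · have := Int.fract_nonneg (t + 1/2); linarith
  · have := Int.fract_lt_one (t + 1/2); linarith

lemma measurable_modHalf : Measurable modHalf := by
  have : Measurable fun t : ℝ => round t := by
    simp only [round_eq]; exact (measurable_id.add_const _).floor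
  exact measurable_id.sub ((measurable_from_top (f := (Int.cast : ℤ → ℝ))).comp this)

/-- fract translation preserves uniform measure on `[0,1)`, for `c ∈ [0,1)`. -/
lemma map_fract_add_aux {c : ℝ} (hc0 : 0 ≤ c) (hc1 : c < 1) :
    Measure.map (fun x => Int.fract (c + x)) (volume.restrict (Set.Ico (0:ℝ) 1))
      = volume.restrict (Set.Ico (0:ℝ) 1) := by
  have hf : Measurable fun x : ℝ => Int.fract (c + x) :=
    (measurable_const.add measurable_id').fract
  ext A hA
  rw [Measure.map_apply hf hA, Measure.restrict_apply (hf hA),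
    Measure.restrict_apply hA]
  have hsplit : Set.Ico (0:ℝ) 1 = Set.Ico 0 (1 - c) ∪ Set.Ico (1 - c) 1 :=
    (Set.Ico_union_Ico_eq_Ico (by linarith) (by linarith)).symm
  have h1 : (fun x => Int.fract (c + x)) ⁻¹' A ∩ Set.Ico 0 (1 - c)
      = (fun x => c + x) ⁻¹' (A ∩ Set.Ico c 1) := by
    ext x
    simp only [Set.mem_inter_iff, Set.mem_preimage, Set.mem_Ico]
    constructor
    · rintro ⟨hxA, hx0, hx1⟩
      have : Int.fract (c + x) = c + x := Int.fract_eq_self.2 ⟨by linarith, by linarith⟩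
      exact ⟨this ▸ hxA, by linarith, by linarith⟩
    · rintro ⟨hxA, hx0, hx1⟩
      have : Int.fract (c + x) = c + x := Int.fract_eq_self.2 ⟨by linarith, by linarith⟩
      exact ⟨by rw [this]; exact hxA, by linarith, by linarith⟩
  have h2 : (fun x => Int.fract (c + x)) ⁻¹' A ∩ Set.Ico (1 - c) 1
      = (fun x => (c - 1) + x) ⁻¹' (A ∩ Set.Ico 0 c) := by
    ext x
    simp only [Set.mem_inter_iff, Set.mem_preimage, Set.mem_Ico]
    constructor
    · rintro ⟨hxA, hx0, hx1⟩
      have : Int.fract (c + x) = c - 1 + x := by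
        rw [show c + x = (c - 1 + x) + (1:ℤ) by push_cast; ring, Int.fract_add_intCast,
          Int.fract_eq_self.2 ⟨by linarith, by linarith⟩]
      exact ⟨this ▸ hxA, by linarith, by linarith⟩
    · rintro ⟨hxA, hx0, hx1⟩
      have : Int.fract (c + x) = c - 1 + x := by
        rw [show c + x = (c - 1 + x) + (1:ℤ) by push_cast; ring, Int.fract_add_intCast,
          Int.fract_eq_self.2 ⟨by linarith, by linarith⟩]
      exact ⟨by rw [this]; exact hxA, by linarith, by linarith⟩
  calc volume ((fun x => Int.fract (c + x)) ⁻¹' A ∩ Set.Ico 0 1)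
      = volume ((fun x => Int.fract (c + x)) ⁻¹' A ∩ Set.Ico 0 (1-c))
        + volume ((fun x => Int.fract (c + x)) ⁻¹' A ∩ Set.Ico (1-c) 1) := by
        rw [hsplit, Set.inter_union_distrib_left]
        exact measure_union
          (Set.disjoint_left.2 (by rintro x ⟨-, -, h1⟩ ⟨-, h2, -⟩; linarith))
          ((hf hA).inter measurableSet_Ico)
    _ = volume (A ∩ Set.Ico c 1) + volume (A ∩ Set.Ico 0 c) := by
        rw [h1, h2, measure_preimage_add, measure_preimage_add]
    _ = volume (A ∩ Set.Ico 0 1) := by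
        rw [show Set.Ico (0:ℝ) 1 = Set.Ico 0 c ∪ Set.Ico c 1 from
            (Set.Ico_union_Ico_eq_Ico (by linarith) (by linarith)).symm,
          Set.inter_union_distrib_left, measure_union
            (Set.disjoint_left.2 (by rintro x ⟨-, -, h1⟩ ⟨-, h2, -⟩; linarith))
            (hA.inter measurableSet_Ico), add_comm]

lemma map_fract_add (c : ℝ) :
    Measure.map (fun x => Int.fract (c + x)) (volume.restrict (Set.Ico (0:ℝ) 1))
      = volume.restrict (Set.Ico (0:ℝ) 1) := by
  have : (fun x : ℝ => Int.fract (c + x)) = fun x => Int.fract (Int.fract c + x) := by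
    funext x
    conv_lhs => rw [show c + x = Int.fract c + x + (⌊c⌋ : ℤ) by
      rw [Int.fract]; push_cast; ring]
    rw [Int.fract_add_intCast]
  rw [this]
  exact map_fract_add_aux (Int.fract_nonneg c) (Int.fract_lt_one c)

lemma map_modHalf_add (c : ℝ) :
    Measure.map (fun x => modHalf (c + x)) (volume.restrict (Set.Ico (-(1/2):ℝ) (1/2)))
      = volume.restrict (Set.Ico (-(1/2):ℝ) (1/2)) := by
  have e1 : volume.restrict (Set.Ico (-(1/2):ℝ) (1/2))
      = Measure.map (fun u : ℝ => u - 1/2) (volume.restrict (Set.Ico (0:ℝ) 1)) := by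
    rw [show volume.restrict (Set.Ico (0:ℝ) 1)
        = volume.restrict ((fun u : ℝ => u - 1/2) ⁻¹' Set.Ico (-(1/2)) (1/2)) by
      congr 1
      exact Set.ext fun x => by
        simp only [Set.mem_preimage, Set.mem_Ico]
        constructor <;> rintro ⟨h1, h2⟩ <;> exact ⟨by linarith, by linarith⟩]
    exact ((measurePreserving_sub_right volume (1/2)).restrict_preimage
      measurableSet_Ico).map_eq.symm
  rw [e1, Measure.map_map (by exact measurable_modHalf.comp (measurable_const.add measurable_id'))
    (measurable_id'.sub_const _)]
  have : ((fun x => modHalf (c + x)) ∘ fun u : ℝ => u - 1/2)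
      = (fun u : ℝ => u - 1/2) ∘ (fun x => Int.fract ((c - 1/2 + 1/2) + x)) := by
    funext u
    simp only [Function.comp_apply, modHalf_eq_fract]
    ring_nf
  rw [this, ← Measure.map_map (measurable_id'.sub_const _)
    (show Measurable fun x : ℝ => Int.fract ((c - 1/2 + 1/2) + x) from
      (measurable_const.add measurable_id').fract), map_fract_add]

lemma map_modHalf_indep {Ω : Type*} [MeasurableSpace Ω] {P : Measure Ω}
    [IsProbabilityMeasure P] {W X : Ω → ℝ} (hW : Measurable W) (hX : Measurable X)
    (hind : ProbabilityTheory.IndepFun W X P)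
    (hXu : Measure.map X P = volume.restrict (Set.Ico (-(1/2):ℝ) (1/2))) :
    Measure.map (fun ω => modHalf (W ω + X ω)) P
      = volume.restrict (Set.Ico (-(1/2):ℝ) (1/2)) := by
  have hprod : P.map (fun ω => (W ω, X ω)) = (P.map W).prod (P.map X) :=
    (ProbabilityTheory.indepFun_iff_map_prod_eq_prod_map_map hW.aemeasurable
      hX.aemeasurable).mp hind
  have hg : Measurable fun p : ℝ × ℝ => modHalf (p.1 + p.2) :=
    measurable_modHalf.comp (measurable_fst.add measurable_snd)
  have hWX : Measurable fun ω => (W ω, X ω) := hW.prodMk hX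
  have : IsProbabilityMeasure (P.map W) := Measure.isProbabilityMeasure_map hW.aemeasurable
  have hmap : Measure.map (fun ω => modHalf (W ω + X ω)) P
      = Measure.map (fun p : ℝ × ℝ => modHalf (p.1 + p.2))
          ((P.map W).prod (volume.restrict (Set.Ico (-(1/2):ℝ) (1/2)))) := by
    rw [← hXu, ← hprod, Measure.map_map hg hWX]; rfl
  rw [hmap]
  ext A hA
  rw [Measure.map_apply hg hA, Measure.prod_apply (hg hA)]
  have hfib : ∀ y : ℝ, (volume.restrict (Set.Ico (-(1/2):ℝ) (1/2)))
      (Prod.mk y ⁻¹' ((fun p : ℝ × ℝ => modHalf (p.1 + p.2)) ⁻¹' A))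
      = (volume.restrict (Set.Ico (-(1/2):ℝ) (1/2))) A := by
    intro y
    have h : Prod.mk y ⁻¹' ((fun p : ℝ × ℝ => modHalf (p.1 + p.2)) ⁻¹' A)
        = (fun x => modHalf (y + x)) ⁻¹' A := rfl
    rw [h, ← Measure.map_apply (show Measurable fun x : ℝ => modHalf (y + x) from
      measurable_modHalf.comp (measurable_const.add measurable_id')) hA,
      map_modHalf_add]
  simp only [hfib, MeasureTheory.lintegral_const, measure_univ, mul_one]

/-- reverse strong induction on `Fin n` -/
lemma Fin.revStrongInduction {n : ℕ} {P : Fin n → Prop}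
    (h : ∀ i : Fin n, (∀ j, i < j → P j) → P i) : ∀ i, P i := by
  have key : ∀ k : ℕ, ∀ i : Fin n, n - i.val ≤ k → P i := by
    intro k
    induction k with
    | zero => intro i hi; have := i.isLt; omega
    | succ k ih =>
      intro i hi
      exact h i fun j hj => ih j (by have h1 := j.isLt; have h2 : i.val < j.val := hj; omega)
  exact fun i => key n i (by omega)

/-- deterministic nearest-plane recursion -/
noncomputable def npSol {n : ℕ} (R : Matrix (Fin n) (Fin n) ℝ) (x : Fin n → ℝ)
    (i : Fin n) : ℤ :=
  -round (x i + ∑ j ∈ (Finset.univ.filter (fun j => i < j)).attach,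
      R i j.1 * (x j.1 + (npSol R x j.1 : ℝ)))
termination_by (n - i.val)
decreasing_by
  have h1 : i < j.1 := (Finset.mem_filter.mp j.2).2
  have h2 := j.1.isLt
  have h3 : i.val < j.1.val := h1
  omega

lemma npSol_eq {n : ℕ} (R : Matrix (Fin n) (Fin n) ℝ) (x : Fin n → ℝ) (i : Fin n) :
    npSol R x i = -round (x i + ∑ j ∈ Finset.univ.filter (fun j => i < j),
      R i j * (x j + (npSol R x j : ℝ))) := by
  rw [npSol]
  congr 3
  exact Finset.sum_attach (Finset.univ.filter fun j => i < j)
    (fun j => R i j * (x j + (npSol R x j : ℝ)))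

lemma npSol_congr {n : ℕ} (R : Matrix (Fin n) (Fin n) ℝ) (x y : Fin n → ℝ) :
    ∀ i : Fin n, (∀ j, i ≤ j → x j = y j) → npSol R x i = npSol R y i := by
  refine Fin.revStrongInduction fun i IH hxy => ?_
  rw [npSol_eq, npSol_eq]
  congr 2
  rw [hxy i le_rfl]
  congr 1
  refine Finset.sum_congr rfl fun j hj => ?_
  have hij : i < j := (Finset.mem_filter.mp hj).2
  rw [hxy j hij.le, IH j hij fun k hk => hxy k (hij.le.trans hk)]

lemma npSol_measurable {n : ℕ} (R : Matrix (Fin n) (Fin n) ℝ) :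
    ∀ i : Fin n, Measurable fun x : Fin n → ℝ => npSol R x i := by
  refine Fin.revStrongInduction fun i IH => ?_
  have h : (fun x : Fin n → ℝ => npSol R x i)
      = fun x => -round (x i + ∑ j ∈ Finset.univ.filter (fun j => i < j),
          R i j * (x j + (npSol R x j : ℝ))) := funext fun x => npSol_eq R x i
  rw [h]
  have hround : Measurable fun t : ℝ => round t := by
    simp only [round_eq]; exact (measurable_id.add_const _).floor
  refine Measurable.neg (hround.comp ?_)
  refine (measurable_pi_apply i).add (Finset.measurable_sum _ fun j hj => ?_)
  have hij : i < j := (Finset.mem_filter.mp hj).2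
  exact ((measurable_pi_apply j).add
    ((measurable_from_top (f := (Int.cast : ℤ → ℝ))).comp (IH j hij))).const_mul _

/-- For an upper unitriangular `R` and `s` with independent coordinates uniform on
`[-1/2,1/2)`, the nearest-plane output `a` satisfies `(R(s+a))ᵢ = Mod(wᵢ + sᵢ)` with
`wᵢ = ∑_{j>i} rᵢⱼ(sⱼ+aⱼ)`; each coordinate is uniform on `[-1/2,1/2)` and
`E[‖R(s+a)‖²] = n/12`. -/
theorem nearest_plane_energy {n : ℕ}
    (R : Matrix (Fin n) (Fin n) ℝ)
    (hRut : ∀ i j : Fin n, j < i → R i j = 0) (hRdiag : ∀ i, R i i = 1)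
    {Ω : Type*} [MeasurableSpace Ω] (P : Measure Ω) [IsProbabilityMeasure P]
    (s : Fin n → Ω → ℝ) (hmeas : ∀ i, Measurable (s i))
    (hindep : ProbabilityTheory.iIndepFun s P)
    (hunif : ∀ i, Measure.map (s i) P = volume.restrict (Set.Ico (-(1/2) : ℝ) (1/2)))
    (a : Ω → Fin n → ℤ)
    (ha : ∀ ω i, a ω i = -round (s i ω +
      ∑ j ∈ Finset.univ.filter (fun j => i < j), R i j * (s j ω + (a ω j : ℝ)))) :
    (∀ ω i, (R.mulVec ((fun j => s j ω) + fun j => ((a ω j : ℤ) : ℝ))) i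
        = modHalf ((∑ j ∈ Finset.univ.filter (fun j => i < j),
            R i j * (s j ω + (a ω j : ℝ))) + s i ω)) ∧
    (∀ i, Measure.map
        (fun ω => (R.mulVec ((fun j => s j ω) + fun j => ((a ω j : ℤ) : ℝ))) i) P
      = volume.restrict (Set.Ico (-(1/2) : ℝ) (1/2))) ∧
    (∫ ω, (∑ i, ((R.mulVec ((fun j => s j ω) + fun j => ((a ω j : ℤ) : ℝ))) i) ^ 2) ∂P
      = (n : ℝ) / 12) := by
  classical
  -- part 1: pointwise identity
  have part1 : ∀ ω i, (R.mulVec ((fun j => s j ω) + fun j => ((a ω j : ℤ) : ℝ))) i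
      = modHalf ((∑ j ∈ Finset.univ.filter (fun j => i < j),
          R i j * (s j ω + (a ω j : ℝ))) + s i ω) := by
    intro ω i
    have hsum : (R.mulVec ((fun j => s j ω) + fun j => ((a ω j : ℤ) : ℝ))) i
        = (s i ω + (a ω i : ℝ))
          + ∑ j ∈ Finset.univ.filter (fun j => i < j), R i j * (s j ω + (a ω j : ℝ)) := by
      simp only [Matrix.mulVec, dotProduct, Pi.add_apply]
      rw [← Finset.sum_filter_add_sum_filter_not Finset.univ (fun j => i < j)
        (fun j => R i j * (s j ω + (a ω j : ℝ))), add_comm]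
      congr 1
      rw [Finset.sum_eq_single_of_mem i (by simp)]
      · rw [hRdiag i, one_mul]
      · intro j hj hne
        have hji : j < i := lt_of_le_of_ne (not_lt.mp (Finset.mem_filter.mp hj).2) hne
        rw [hRut i j hji, zero_mul]
    rw [hsum, ha ω i, modHalf]
    push_cast
    rw [add_comm (s i ω) (∑ j ∈ Finset.univ.filter (fun j => i < j),
      R i j * (s j ω + (a ω j : ℝ)))]
    ring
  -- a equals the deterministic recursion
  have key : ∀ ω, ∀ i, a ω i = npSol R (fun k => s k ω) i := by
    intro ω
    refine Fin.revStrongInduction fun i IH => ?_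
    rw [ha ω i, npSol_eq]
    have h : (∑ j ∈ Finset.univ.filter (fun j => i < j), R i j * (s j ω + (a ω j : ℝ)))
        = ∑ j ∈ Finset.univ.filter (fun j => i < j),
            R i j * (s j ω + (npSol R (fun k => s k ω) j : ℝ)) :=
      Finset.sum_congr rfl fun j hj => by rw [IH j (Finset.mem_filter.mp hj).2]
    rw [h]
  have hs : Measurable fun ω => (fun k => s k ω) := measurable_pi_lambda _ hmeas
  have hameas : ∀ j, Measurable fun ω => (a ω j : ℝ) := by
    intro j
    have h : (fun ω => (a ω j : ℝ))
        = (fun x : Fin n → ℝ => ((npSol R x j : ℤ) : ℝ)) ∘ fun ω k => s k ω :=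
      funext fun ω => by simp [key ω j]
    rw [h]
    exact ((measurable_from_top (f := (Int.cast : ℤ → ℝ))).comp
      (npSol_measurable R j)).comp hs
  have hWmeas : ∀ i, Measurable fun ω => ∑ j ∈ Finset.univ.filter (fun j => i < j),
      R i j * (s j ω + (a ω j : ℝ)) := fun i =>
    Finset.measurable_sum _ fun j _ => ((hmeas j).add (hameas j)).const_mul _
  -- independence of the carry term from s i
  have hWind : ∀ i, ProbabilityTheory.IndepFun
      (fun ω => ∑ j ∈ Finset.univ.filter (fun j => i < j), R i j * (s j ω + (a ω j : ℝ)))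
      (s i) P := by
    intro i
    set T : Finset (Fin n) := Finset.univ.filter fun j => i < j with hT
    have hdisj : Disjoint T ({i} : Finset (Fin n)) :=
      Finset.disjoint_singleton_right.mpr (by simp [hT])
    have hind0 := hindep.indepFun_finset T {i} hdisj hmeas
    set ext : ({j // j ∈ T} → ℝ) → (Fin n → ℝ) := fun t k =>
      if h : i < k then t ⟨k, by simp [hT, h]⟩ else 0 with hext
    have hext_meas : Measurable ext := by
      refine measurable_pi_lambda _ fun k => ?_
      by_cases h : i < k
      · simp only [hext, dif_pos h]; exact measurable_pi_apply _
      · simp only [hext, dif_neg h]; exact measurable_const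
    set φ : ({j // j ∈ T} → ℝ) → ℝ := fun t =>
      ∑ j ∈ T.attach, R i j.1 * (t j + (npSol R (ext t) j.1 : ℝ)) with hφ
    have hφmeas : Measurable φ := by
      refine Finset.measurable_sum _ fun j _ => ?_
      exact ((measurable_pi_apply j).add
        ((measurable_from_top (f := (Int.cast : ℤ → ℝ))).comp
          ((npSol_measurable R j.1).comp hext_meas))).const_mul _
    have hcomp : (fun ω => ∑ j ∈ T, R i j * (s j ω + (a ω j : ℝ)))
        = φ ∘ (fun ω (j : {j // j ∈ T}) => s j.1 ω) := by
      funext ω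
      have hnp : ∀ j : {j // j ∈ T},
          npSol R (ext fun j : {j // j ∈ T} => s j.1 ω) j.1 = a ω j.1 := by
        intro j
        rw [key ω j.1]
        refine npSol_congr R _ _ j.1 fun k hk => ?_
        have hik : i < k :=
          lt_of_lt_of_le ((Finset.mem_filter.mp j.2).2) hk
        simp only [hext, dif_pos hik]
      simp only [Function.comp_apply, hφ]
      rw [← Finset.sum_attach T (fun j => R i j * (s j ω + (a ω j : ℝ)))]
      refine Finset.sum_congr rfl fun j _ => ?_
      rw [hnp j]
    have hsingle : s i = (fun v : {j // j ∈ ({i} : Finset (Fin n))} → ℝ =>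
        v ⟨i, Finset.mem_singleton_self i⟩)
        ∘ (fun ω (j : {j // j ∈ ({i} : Finset (Fin n))}) => s j.1 ω) := rfl
    rw [show (fun ω => ∑ j ∈ Finset.univ.filter (fun j => i < j),
        R i j * (s j ω + (a ω j : ℝ)))
      = (fun ω => ∑ j ∈ T, R i j * (s j ω + (a ω j : ℝ))) from rfl, hcomp, hsingle]
    exact hind0.comp hφmeas (measurable_pi_apply _)
  have part2 : ∀ i, Measure.map (fun ω => modHalf ((∑ j ∈ Finset.univ.filter
      (fun j => i < j), R i j * (s j ω + (a ω j : ℝ))) + s i ω)) P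
      = volume.restrict (Set.Ico (-(1/2) : ℝ) (1/2)) := fun i =>
    map_modHalf_indep (hWmeas i) (hmeas i) (hWind i) (hunif i)
  have hXmeas : ∀ i, Measurable fun ω => modHalf ((∑ j ∈ Finset.univ.filter
      (fun j => i < j), R i j * (s j ω + (a ω j : ℝ))) + s i ω) := fun i =>
    measurable_modHalf.comp ((hWmeas i).add (hmeas i))
  refine ⟨part1, fun i => ?_, ?_⟩
  · simp only [part1]
    exact part2 i
  · simp only [part1]
    have hint : ∀ i : Fin n, Integrable (fun ω => (modHalf ((∑ j ∈ Finset.univ.filter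
        (fun j => i < j), R i j * (s j ω + (a ω j : ℝ))) + s i ω)) ^ 2) P := by
      intro i
      refine (integrable_const ((1:ℝ)/4)).mono'
        ((hXmeas i).pow_const 2).aestronglyMeasurable ?_
      refine Filter.Eventually.of_forall fun ω => ?_
      rw [Real.norm_eq_abs, abs_of_nonneg (sq_nonneg _)]
      have h := modHalf_mem ((∑ j ∈ Finset.univ.filter (fun j => i < j),
        R i j * (s j ω + (a ω j : ℝ))) + s i ω)
      nlinarith [h.1, h.2]
    have hval : ∀ i : Fin n, ∫ ω, (modHalf ((∑ j ∈ Finset.univ.filter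
        (fun j => i < j), R i j * (s j ω + (a ω j : ℝ))) + s i ω)) ^ 2 ∂P
        = 1/12 := by
      intro i
      have hmap := MeasureTheory.integral_map (μ := P) (φ := fun ω => modHalf ((∑ j ∈
          Finset.univ.filter (fun j => i < j), R i j * (s j ω + (a ω j : ℝ))) + s i ω))
        (f := fun x : ℝ => x ^ 2) (hXmeas i).aemeasurable
        ((measurable_id'.pow_const 2).aestronglyMeasurable)
      rw [← hmap, part2 i, Measure.restrict_congr_set Ico_ae_eq_Ioc,
        ← intervalIntegral.integral_of_le (by norm_num : (-(1/2) : ℝ) ≤ 1/2),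
        integral_pow]
      norm_num
    rw [MeasureTheory.integral_finset_sum Finset.univ fun i _ => hint i]
    rw [Finset.sum_congr rfl fun (i : Fin n) _ => hval i]
    simp only [Finset.sum_const, Finset.card_univ, Fintype.card_fin, nsmul_eq_mul]
    ring
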